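/- Let T and S be monads on the category Type u of sets and let E be a set. Define the monad T(- + E) whose underlying functor sends a set X to T(X ⊕ E), with unit x ↦ η^T(inl x) and multiplication μ^T ∘ T([id, η^T ∘ inr]) (the exception monad transformer applied to T). If the forgetful functor from TAlg(T,S) to Type u has a left adjoint (i.e., the tensor T ⊗ S exists), then the forgetful functor from TAlg(T(- + E), S) to Type u has a left adjoint (i.e., the tensor T(- + E) ⊗ S exists). -/

import Mathlib

open CategoryTheory

universe u

/-- A `(T,S)`-tensor algebra: a set with Eilenberg–Moore algebra structures for both
monads, satisfying the tensor law. -/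
structure TensorAlg (T S : Monad (Type u)) where
  carrier : Type u
  α : T.obj carrier → carrier
  β : S.obj carrier → carrier
  α_unit : ∀ x : carrier, α (T.η.app carrier x) = x
  α_mul : ∀ m : T.obj (T.obj carrier), α (T.μ.app carrier m) = α (T.map (↾α) m)
  β_unit : ∀ x : carrier, β (S.η.app carrier x) = x
  β_mul : ∀ m : S.obj (S.obj carrier), β (S.μ.app carrier m) = β (S.map (↾β) m)
  tensor_law : ∀ {Y Z : Type u} (p : T.obj Y) (q : S.obj Z) (f : Y × Z → carrier),
    α (T.map (↾fun y => β (S.map (↾fun z => f (y, z)) q)) p) =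
      β (S.map (↾fun z => α (T.map (↾fun y => f (y, z)) p)) q)

/-- Morphisms of tensor algebras: maps homomorphic for both structures. -/
@[ext]
structure TensorAlgHom {T S : Monad (Type u)} (A B : TensorAlg T S) where
  toFun : A.carrier → B.carrier
  map_α : ∀ m : T.obj A.carrier, toFun (A.α m) = B.α (T.map (↾toFun) m)
  map_β : ∀ m : S.obj A.carrier, toFun (A.β m) = B.β (S.map (↾toFun) m)

instance TensorAlg.instCategory {T S : Monad (Type u)} : Category (TensorAlg T S) where
  Hom A B := TensorAlgHom A B
  id A :=
    { toFun := id
      map_α := fun m => by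
        show A.α m = A.α (T.map (𝟙 A.carrier) m)
        rw [Functor.map_id_apply]
      map_β := fun m => by
        show A.β m = A.β (S.map (𝟙 A.carrier) m)
        rw [Functor.map_id_apply] }
  comp {A B C} f g :=
    { toFun := g.toFun ∘ f.toFun
      map_α := fun m => by
        show g.toFun (f.toFun (A.α m)) = C.α (T.map (↾(g.toFun ∘ f.toFun)) m)
        rw [f.map_α, g.map_α]
        congr 1
        exact (Functor.map_comp_apply T.toFunctor (↾f.toFun) (↾g.toFun) m).symm
      map_β := fun m => by
        show g.toFun (f.toFun (A.β m)) = C.β (S.map (↾(g.toFun ∘ f.toFun)) m)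
        rw [f.map_β, g.map_β]
        congr 1
        exact (Functor.map_comp_apply S.toFunctor (↾f.toFun) (↾g.toFun) m).symm }
  id_comp f := by apply TensorAlgHom.ext; rfl
  comp_id f := by apply TensorAlgHom.ext; rfl
  assoc f g h := by apply TensorAlgHom.ext; rfl

/-- The forgetful functor from `(T,S)`-tensor algebras to sets. -/
def forgetTAlg (T S : Monad (Type u)) : TensorAlg T S ⥤ Type u where
  obj A := A.carrier
  map f := ↾(TensorAlgHom.toFun f)
  map_id _ := rfl
  map_comp _ _ := rfl


namespace MonadWithExcept

variable (T : Monad (Type u)) (E : Type u)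

/-- Pointwise naturality of the unit. -/
theorem eta_nat {A B : Type u} (g : A → B) (a : A) :
    T.map (↾g) (T.η.app A a) = T.η.app B (g a) :=
  (NatTrans.naturality_apply T.η (↾g) a).symm

/-- Pointwise naturality of the multiplication. -/
theorem mu_nat {A B : Type u} (g : A → B) (m : T.obj (T.obj A)) :
    T.map (↾g) (T.μ.app A m) = T.μ.app B (T.map (T.map (↾g)) m) :=
  (NatTrans.naturality_apply T.μ (↾g) m).symm

theorem mapmap {A B C : Type u} (f : A → B) (g : B → C) (m : T.obj A) :
    T.map (↾g) (T.map (↾f) m) = T.map (↾fun a => g (f a)) m :=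
  (Functor.map_comp_apply T.toFunctor (↾f) (↾g) m).symm

theorem lu {A : Type u} (m : T.obj A) :
    T.μ.app A (T.η.app (T.obj A) m) = m :=
  types_congr_hom (T.left_unit A) m

theorem ru {A : Type u} (m : T.obj A) :
    T.μ.app A (T.map (T.η.app A) m) = m :=
  types_congr_hom (T.right_unit A) m

theorem assoc' {A : Type u} (m : T.obj (T.obj (T.obj A))) :
    T.μ.app A (T.map (T.μ.app A) m) = T.μ.app A (T.μ.app (T.obj A) m) :=
  types_congr_hom (T.assoc A) m

/-- `[id, η ∘ inr] : T(X ⊕ E) ⊕ E → T(X ⊕ E)`. -/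
def jmap (X : Type u) : (T.obj (X ⊕ E)) ⊕ E → T.obj (X ⊕ E) :=
  Sum.elim id fun e => T.η.app (X ⊕ E) (Sum.inr e)

end MonadWithExcept

open MonadWithExcept in
/-- The exception monad transformer applied to `T`: the monad `T(- + E)`. -/
def monadWithExcept (T : Monad (Type u)) (E : Type u) : Monad (Type u) where
  obj X := T.obj (X ⊕ E)
  map {X Y} f := T.map (↾(Sum.map f id))
  map_id X := by
    show T.map (↾(Sum.map id id)) = _
    rw [Sum.map_id_id]
    exact T.toFunctor.map_id (X ⊕ E)
  map_comp {X Y Z} f g := by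
    ext m
    show T.map (↾(Sum.map (f ≫ g) id)) m = T.map (↾(Sum.map g id)) (T.map (↾(Sum.map f id)) m)
    rw [mapmap]
    have h : Sum.map (f ≫ g) (id : E → E)
        = fun a => Sum.map g (id : E → E) (Sum.map f (id : E → E) a) := by
      funext s; cases s <;> rfl
    rw [h]
  η :=
    { app := fun X => ↾fun x => T.η.app (X ⊕ E) (Sum.inl x)
      naturality := fun X Y f => by
        ext x
        show T.η.app (Y ⊕ E) (Sum.inl (f x)) = T.map (↾(Sum.map f id)) (T.η.app (X ⊕ E) (Sum.inl x))
        rw [eta_nat]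
        rfl }
  μ :=
    { app := fun X => ↾fun m => T.μ.app (X ⊕ E) (T.map (↾(jmap T E X)) m)
      naturality := fun X Y f => by
        ext m
        show T.μ.app (Y ⊕ E) (T.map (↾(jmap T E Y)) (T.map (↾(Sum.map (T.map (↾(Sum.map f id))) id)) m))
          = T.map (↾(Sum.map f id)) (T.μ.app (X ⊕ E) (T.map (↾(jmap T E X)) m))
        rw [mapmap, mu_nat, ← Functor.map_comp_apply]
        have h : (fun a => jmap T E Y (Sum.map (T.map (↾(Sum.map f id))) id a))
            = fun a => T.map (↾(Sum.map f id)) (jmap T E X a) := by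
          funext s
          cases s with
          | inl t => rfl
          | inr e =>
            show T.η.app (Y ⊕ E) (Sum.inr e)
              = T.map (↾(Sum.map f id)) (T.η.app (X ⊕ E) (Sum.inr e))
            rw [eta_nat]
            rfl
        rw [h]
        try rfl }
  left_unit X := by
    ext m
    show T.μ.app (X ⊕ E) (T.map (↾(jmap T E X)) (T.η.app (T.obj (X ⊕ E) ⊕ E) (Sum.inl m))) = m
    rw [eta_nat]
    exact lu T m
  right_unit X := by
    ext m
    show T.μ.app (X ⊕ E)
        (T.map (↾(jmap T E X)) (T.map (↾(Sum.map (fun x => T.η.app (X ⊕ E) (Sum.inl x)) id)) m)) = m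
    rw [mapmap]
    have : (fun a => jmap T E X (Sum.map (fun x => T.η.app (X ⊕ E) (Sum.inl x)) id a))
        = ⇑(T.η.app (X ⊕ E)) := by
      funext s; cases s <;> rfl
    rw [this]
    exact ru T m
  assoc X := by
    ext m
    show T.μ.app (X ⊕ E)
        (T.map (↾(jmap T E X))
          (T.map (↾(Sum.map (fun m' => T.μ.app (X ⊕ E) (T.map (↾(jmap T E X)) m')) id)) m))
      = T.μ.app (X ⊕ E)
          (T.map (↾(jmap T E X))
            (T.μ.app (T.obj (X ⊕ E) ⊕ E) (T.map (↾(jmap T E (T.obj (X ⊕ E)))) m)))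
    rw [mapmap, mu_nat, ← Functor.map_comp_apply, ← assoc', ← Functor.map_comp_apply]
    have h : (fun a => jmap T E X
          (Sum.map (fun m' => T.μ.app (X ⊕ E) (T.map (↾(jmap T E X)) m')) id a))
        = fun a => T.μ.app (X ⊕ E) (T.map (↾(jmap T E X)) (jmap T E (T.obj (X ⊕ E)) a)) := by
      funext s
      cases s with
      | inl t => rfl
      | inr e =>
        show T.η.app (X ⊕ E) (Sum.inr e)
          = T.μ.app (X ⊕ E) (T.map (↾(jmap T E X)) (T.η.app (T.obj (X ⊕ E) ⊕ E) (Sum.inr e)))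
        rw [eta_nat, lu]
        rfl
    rw [h]
    try rfl

/-!
A `(T(- + E), S)`-tensor algebra is the same thing as a `(T, S)`-tensor algebra `A` with points
`p : E → A` that `β` fixes on constant families: restrict `α` along `inl` and put
`p e = α (η (inr e))`; conversely `α ∘ T [id, p]` is a `T(- + E)`-structure, and the tensor law
for it is exactly where `β`-fixedness of the points is needed. So the free
`(T(- + E), S)`-tensor algebra on `X` is the free `(T, S)`-tensor algebra `F (X ⊕ E)` with the
generators from `E` forced to be `β`-fixed. Instead of generating that congruence, we quotient
`F (X ⊕ E)` by the joint kernel of all its homomorphisms into restrictions of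
`(T(- + E), S)`-tensor algebras; the quotient is again a tensor algebra, its points are
`β`-fixed, and its universal property is inherited from that of `F (X ⊕ E)`.
-/

open MonadWithExcept

namespace CategoryTheory.Monad

variable (T : Monad (Type u))

theorem map_congr_apply {X Y : Type u} {f g : X → Y} (h : ∀ x, f x = g x) (m : T.obj X) :
    T.map (↾f) m = T.map (↾g) m := by
  rw [funext h]

theorem map_id_fun_apply {X : Type u} (m : T.obj X) : T.map (↾fun x : X => x) m = m :=
  Functor.map_id_apply T.toFunctor _ m

theorem map_μ_app {X Y : Type u} (g : X → Y) (m : T.obj (T.obj X)) :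
    T.map (↾g) (T.μ.app X m) = T.μ.app Y (T.map (↾fun t => T.map (↾g) t) m) :=
  mu_nat T g m

end CategoryTheory.Monad

section MonadWithExcept

variable {T : Monad (Type u)} {E : Type u}

theorem monadWithExcept_map_apply {X Y : Type u} (f : X → Y) (m : T.obj (X ⊕ E)) :
    (monadWithExcept T E).map (↾f) m = T.map (↾Sum.map f id) m :=
  rfl

theorem map_sumMap_map_inl {X Y : Type u} (g : X → Y) (p : T.obj X) :
    T.map (↾Sum.map g (id : E → E)) (T.map (↾Sum.inl) p) =
      T.map (↾Sum.inl) (T.map (↾g) p) := by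
  rw [mapmap, mapmap]
  rfl

end MonadWithExcept

namespace TensorAlg

variable {T S : Monad (Type u)}

def IsβFixed (A : TensorAlg T S) (a : A.carrier) : Prop :=
  ∀ {Z : Type u} (q : S.obj Z), A.β (S.map (↾fun _ => a) q) = a

section Restrict

variable {E : Type u} (B : TensorAlg (monadWithExcept T E) S)

def throw (e : E) : B.carrier :=
  B.α (T.η.app (B.carrier ⊕ E) (Sum.inr e))

theorem isβFixed_throw (e : E) : B.IsβFixed (B.throw e) := by
  intro Z q
  have h := B.tensor_law (Y := Z) (T.η.app (Z ⊕ E) (Sum.inr e)) q fun _ => B.throw e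
  simp only [monadWithExcept_map_apply, eta_nat] at h
  exact h.symm

variable {B} in
theorem map_throw {C : TensorAlg (monadWithExcept T E) S} (ψ : B ⟶ C) (e : E) :
    ψ.toFun (B.throw e) = C.throw e := by
  have h := ψ.map_α (T.η.app (B.carrier ⊕ E) (Sum.inr e))
  rwa [monadWithExcept_map_apply, eta_nat] at h

-- `(monadWithExcept T E).obj X` is `T.obj (X ⊕ E)` only up to unfolding a definition, hence the
-- occasional `erw` below.
theorem α_μ_app (m : T.obj (T.obj (B.carrier ⊕ E))) :
    B.α (T.μ.app _ m) = B.α (T.map (↾fun t => Sum.inl (B.α t)) m) := by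
  have h : B.α (T.μ.app _ (T.map (↾jmap T E B.carrier) (T.map (↾Sum.inl) m))) =
      B.α (T.map (↾Sum.map B.α id) (T.map (↾Sum.inl) m)) :=
    B.α_mul _
  erw [mapmap, mapmap] at h
  exact (congrArg B.α (congrArg _ (T.map_id_fun_apply m))).symm.trans h

abbrev restrict : TensorAlg T S where
  carrier := B.carrier
  α m := B.α (T.map (↾Sum.inl) m)
  β := B.β
  α_unit x := by
    simp only [eta_nat]
    exact B.α_unit x
  α_mul m := by
    erw [T.map_μ_app, α_μ_app, mapmap, mapmap]
  β_unit := B.β_unit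
  β_mul := B.β_mul
  tensor_law p q f := by
    have h := B.tensor_law (T.map (↾Sum.inl) p) q f
    simp only [monadWithExcept_map_apply, map_sumMap_map_inl] at h
    exact h

theorem α_map_inl_elim_throw {V : Type u} (k : V → B.carrier) (m : T.obj (V ⊕ E)) :
    B.α (T.map (↾fun w => Sum.inl (Sum.elim k B.throw w)) m) =
      B.α (T.map (↾Sum.map k id) m) := by
  have h := B.α_μ_app (T.map (↾fun w => T.η.app _ (Sum.map k id w)) m)
  erw [mapmap] at h
  calc B.α (T.map (↾fun w => Sum.inl (Sum.elim k B.throw w)) m)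
      = B.α (T.map (↾fun w => Sum.inl (B.α (T.η.app _ (Sum.map k id w)))) m) := by
        refine congrArg B.α (T.map_congr_apply ?_ m)
        rintro (v | e)
        · exact congrArg Sum.inl (B.α_unit (k v)).symm
        · rfl
    _ = B.α (T.μ.app _ (T.map (T.η.app _) (T.map (↾Sum.map k id) m))) :=
        h.symm.trans (congrArg B.α (congrArg _ (mapmap T _ _ m).symm))
    _ = B.α (T.map (↾Sum.map k id) m) := by rw [ru]

end Restrict

section WithExcept

variable {E : Type u} (A : TensorAlg T S) (p : E → A.carrier)

theorem α_map_elim_μ_app (m : T.obj (T.obj (A.carrier ⊕ E) ⊕ E)) :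
    A.α (T.map (↾Sum.elim id p) (T.μ.app _ (T.map (↾jmap T E _) m))) =
      A.α (T.map (↾Sum.elim id p)
        (T.map (↾Sum.map (fun t => A.α (T.map (↾Sum.elim id p) t)) id) m)) := by
  rw [T.map_μ_app, A.α_mul, mapmap, mapmap, mapmap]
  refine congrArg A.α (T.map_congr_apply ?_ m)
  rintro (t | e)
  · rfl
  · exact (congrArg A.α (eta_nat T _ _)).trans (A.α_unit (p e))

theorem α_map_elim_tensor_law (hp : ∀ e, A.IsβFixed (p e)) {Y Z : Type u}
    (r : T.obj (Y ⊕ E)) (q : S.obj Z) (f : Y × Z → A.carrier) :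
    A.α (T.map (↾Sum.elim id p)
        (T.map (↾Sum.map (fun y => A.β (S.map (↾fun z => f (y, z)) q)) id) r)) =
      A.β (S.map (↾fun z => A.α (T.map (↾Sum.elim id p)
        (T.map (↾Sum.map (fun y => f (y, z)) id) r))) q) := by
  calc _ = A.α (T.map
          (↾fun w => A.β (S.map (↾fun z => Sum.elim (f ⟨·, z⟩) p w) q)) r) := by
        rw [mapmap]
        refine congrArg A.α (T.map_congr_apply ?_ r)
        rintro (y | e)
        · rfl
        · exact (hp e q).symm
    _ = A.β (S.map (↾fun z => A.α (T.map (↾fun w => Sum.elim (f ⟨·, z⟩) p w) r)) q) :=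
        A.tensor_law r q fun wz => Sum.elim (f ⟨·, wz.2⟩) p wz.1
    _ = _ := by
        refine congrArg A.β (S.map_congr_apply (fun z => ?_) q)
        rw [mapmap]
        refine congrArg A.α (T.map_congr_apply ?_ r)
        rintro (y | e) <;> rfl

def withExcept (hp : ∀ e, A.IsβFixed (p e)) : TensorAlg (monadWithExcept T E) S where
  carrier := A.carrier
  α m := A.α (T.map (↾Sum.elim id p) m)
  β := A.β
  α_unit x := by
    show A.α (T.map (↾Sum.elim id p) (T.η.app _ (Sum.inl x))) = x
    rw [eta_nat]
    exact A.α_unit x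
  α_mul := A.α_map_elim_μ_app p
  β_unit := A.β_unit
  β_mul := A.β_mul
  tensor_law := A.α_map_elim_tensor_law p hp

variable {A p} {hp : ∀ e, A.IsβFixed (p e)}

theorem withExcept_throw (e : E) : (A.withExcept p hp).throw e = p e := by
  show A.α (T.map (↾Sum.elim id p) (T.η.app _ (Sum.inr e))) = p e
  rw [eta_nat]
  exact A.α_unit (p e)

variable {B : TensorAlg (monadWithExcept T E) S}

def liftWithExcept (χ : A ⟶ B.restrict) (hχ : ∀ e, χ.toFun (p e) = B.throw e) :
    A.withExcept p hp ⟶ B where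
  toFun := χ.toFun
  map_α (m : T.obj (A.carrier ⊕ E)) := by
    show χ.toFun (A.α (T.map (↾Sum.elim id p) m)) = B.α (T.map (↾Sum.map χ.toFun id) m)
    rw [χ.map_α]
    show B.α (T.map (↾Sum.inl) (T.map (↾χ.toFun) (T.map (↾Sum.elim id p) m))) = _
    rw [mapmap, mapmap, ← B.α_map_inl_elim_throw]
    refine congrArg B.α (T.map_congr_apply ?_ m)
    rintro (a | e)
    · rfl
    · exact congrArg Sum.inl (hχ e)
  map_β := χ.map_β

def restrictWithExcept (ψ : A.withExcept p hp ⟶ B) : A ⟶ B.restrict where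
  toFun := ψ.toFun
  map_α (m : T.obj A.carrier) := by
    have hm : T.map (↾Sum.elim id p) (T.map (↾Sum.inl) m) = m := by
      rw [mapmap]
      exact T.map_id_fun_apply m
    calc ψ.toFun (A.α m) = ψ.toFun ((A.withExcept p hp).α (T.map (↾Sum.inl) m)) :=
          congrArg (fun m => ψ.toFun (A.α m)) hm.symm
      _ = B.α (T.map (↾Sum.map ψ.toFun id) (T.map (↾Sum.inl) m)) := ψ.map_α _
      _ = B.α (T.map (↾Sum.inl) (T.map (↾ψ.toFun) m)) :=
          congrArg B.α (map_sumMap_map_inl ψ.toFun m)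
  map_β := ψ.map_β

end WithExcept

section Coimage

variable {A : TensorAlg T S} {ι : Type*} {C : ι → TensorAlg T S} (χ : ∀ i, A ⟶ C i)

abbrev coimageSetoid : Setoid A.carrier :=
  Setoid.ker fun a i => (χ i).toFun a

theorem coimageSetoid_mk_eq_iff {a b : A.carrier} :
    Quotient.mk (coimageSetoid χ) a = Quotient.mk _ b ↔ ∀ i, (χ i).toFun a = (χ i).toFun b :=
  Quotient.eq.trans funext_iff

theorem coimageSetoid_mk_α_map_congr {W : Type u} {f f' : W → A.carrier}
    (h : ∀ w, Quotient.mk (coimageSetoid χ) (f w) = Quotient.mk _ (f' w)) (m : T.obj W) :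
    Quotient.mk (coimageSetoid χ) (A.α (T.map (↾f) m)) =
      Quotient.mk _ (A.α (T.map (↾f') m)) := by
  refine (coimageSetoid_mk_eq_iff χ).2 fun i => ?_
  rw [(χ i).map_α, (χ i).map_α, mapmap, mapmap]
  exact congrArg _ (T.map_congr_apply (fun w => (coimageSetoid_mk_eq_iff χ).1 (h w) i) m)

theorem coimageSetoid_mk_β_map_congr {W : Type u} {f f' : W → A.carrier}
    (h : ∀ w, Quotient.mk (coimageSetoid χ) (f w) = Quotient.mk _ (f' w)) (m : S.obj W) :
    Quotient.mk (coimageSetoid χ) (A.β (S.map (↾f) m)) =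
      Quotient.mk _ (A.β (S.map (↾f') m)) := by
  refine (coimageSetoid_mk_eq_iff χ).2 fun i => ?_
  rw [(χ i).map_β, (χ i).map_β, mapmap, mapmap]
  exact congrArg _ (S.map_congr_apply (fun w => (coimageSetoid_mk_eq_iff χ).1 (h w) i) m)

/-- The index type `ι` may be large: the quotient is by a relation on `A`, so it stays in
`Type u`. -/
noncomputable def coimage : TensorAlg T S where
  carrier := _root_.Quotient (coimageSetoid χ)
  α m := Quotient.mk _ (A.α (T.map (↾Quotient.out) m))
  β m := Quotient.mk _ (A.β (S.map (↾Quotient.out) m))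
  α_unit x := by
    rw [eta_nat, A.α_unit, Quotient.out_eq]
  α_mul m := by
    rw [T.map_μ_app, A.α_mul, mapmap, mapmap]
    exact coimageSetoid_mk_α_map_congr χ (fun t => (Quotient.out_eq _).symm) m
  β_unit x := by
    rw [eta_nat, A.β_unit, Quotient.out_eq]
  β_mul m := by
    rw [S.map_μ_app, A.β_mul, mapmap, mapmap]
    exact coimageSetoid_mk_β_map_congr χ (fun t => (Quotient.out_eq _).symm) m
  tensor_law p q f := by
    calc _ = Quotient.mk _
          (A.α (T.map (↾fun y => A.β (S.map (↾fun z => (f (y, z)).out) q)) p)) := by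
          rw [mapmap]
          refine coimageSetoid_mk_α_map_congr χ (fun y => ?_) p
          rw [mapmap]
          exact Quotient.out_eq _
      _ = Quotient.mk _
          (A.β (S.map (↾fun z => A.α (T.map (↾fun y => (f (y, z)).out) p)) q)) :=
          congrArg _ (A.tensor_law p q fun yz => (f yz).out)
      _ = _ := by
          rw [mapmap]
          refine coimageSetoid_mk_β_map_congr χ (fun z => ?_) q
          rw [mapmap]
          exact (Quotient.out_eq _).symm

noncomputable def coimage.mk : A ⟶ coimage χ where
  toFun := Quotient.mk _
  map_α m := by
    show _ = Quotient.mk _ (A.α (T.map (↾Quotient.out) (T.map (↾Quotient.mk _) m)))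
    rw [mapmap]
    conv_lhs => rw [← T.map_id_fun_apply m]
    exact coimageSetoid_mk_α_map_congr χ (fun a => (Quotient.out_eq _).symm) m
  map_β m := by
    show _ = Quotient.mk _ (A.β (S.map (↾Quotient.out) (S.map (↾Quotient.mk _) m)))
    rw [mapmap]
    conv_lhs => rw [← S.map_id_fun_apply m]
    exact coimageSetoid_mk_β_map_congr χ (fun a => (Quotient.out_eq _).symm) m

theorem coimage.mk_surjective : Function.Surjective (coimage.mk χ).toFun :=
  Quotient.mk_surjective

noncomputable def coimage.lift (i : ι) : coimage χ ⟶ C i where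
  toFun := Quotient.lift (χ i).toFun fun _ _ h => congrFun h i
  map_α (m : T.obj (_root_.Quotient (coimageSetoid χ))) := by
    show (χ i).toFun (A.α _) = _
    rw [(χ i).map_α, mapmap]
    refine congrArg _ (T.map_congr_apply (fun x => ?_) m)
    conv_rhs => rw [← Quotient.out_eq x]
    rfl
  map_β (m : S.obj (_root_.Quotient (coimageSetoid χ))) := by
    show (χ i).toFun (A.β _) = _
    rw [(χ i).map_β, mapmap]
    refine congrArg _ (S.map_congr_apply (fun x => ?_) m)
    conv_rhs => rw [← Quotient.out_eq x]
    rfl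

end Coimage

section Free

variable {F : Type u ⥤ TensorAlg T S} (adj : F ⊣ forgetTAlg T S)

def of {Y : Type u} : Y → (F.obj Y).carrier :=
  adj.unit.app Y

theorem hom_ext_of {Y : Type u} {B : TensorAlg T S} {χ₁ χ₂ : F.obj Y ⟶ B}
    (h : ∀ y, χ₁.toFun (of adj y) = χ₂.toFun (of adj y)) : χ₁ = χ₂ := by
  apply (adj.homEquiv Y B).injective
  rw [Adjunction.homEquiv_unit, Adjunction.homEquiv_unit]
  ext y
  exact h y

variable (E X : Type u)

def exceptLift (i : Σ B : TensorAlg (monadWithExcept T E) S, X → B.carrier) :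
    F.obj (X ⊕ E) ⟶ i.1.restrict :=
  (adj.homEquiv (X ⊕ E) i.1.restrict).symm (↾Sum.elim i.2 i.1.throw)

theorem exceptLift_of (i : Σ B : TensorAlg (monadWithExcept T E) S, X → B.carrier)
    (w : X ⊕ E) : (exceptLift adj E X i).toFun (of adj w) = Sum.elim i.2 i.1.throw w := by
  have h := (adj.homEquiv (X ⊕ E) i.1.restrict).apply_symm_apply (↾Sum.elim i.2 i.1.throw)
  rw [Adjunction.homEquiv_unit] at h
  exact types_congr_hom h w

noncomputable def freeCoimage : TensorAlg T S :=
  coimage (exceptLift adj E X)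

noncomputable def freePoint (e : E) : (freeCoimage adj E X).carrier :=
  (coimage.mk _).toFun (of adj (Sum.inr e))

theorem isβFixed_freePoint (e : E) : (freeCoimage adj E X).IsβFixed (freePoint adj E X e) := by
  intro Z q
  have hmk := (coimage.mk (exceptLift adj E X)).map_β (S.map (↾fun _ => of adj (Sum.inr e)) q)
  rw [mapmap] at hmk
  refine hmk.symm.trans ((coimageSetoid_mk_eq_iff _).2 fun i => ?_)
  rw [(exceptLift adj E X i).map_β, mapmap, exceptLift_of]
  exact i.1.isβFixed_throw e q

noncomputable def free : TensorAlg (monadWithExcept T E) S :=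
  (freeCoimage adj E X).withExcept (freePoint adj E X) (isβFixed_freePoint adj E X)

noncomputable def freeHomEquiv (B : TensorAlg (monadWithExcept T E) S) :
    (free adj E X ⟶ B) ≃ (X ⟶ (forgetTAlg (monadWithExcept T E) S).obj B) where
  toFun ψ := ↾fun x => ψ.toFun ((coimage.mk _).toFun (of adj (Sum.inl x)))
  invFun g := liftWithExcept (coimage.lift (exceptLift adj E X) ⟨B, g⟩) fun e =>
    exceptLift_of adj E X ⟨B, g⟩ (Sum.inr e)
  left_inv ψ := by
    have hlift : exceptLift adj E X
          ⟨B, fun x => ψ.toFun ((coimage.mk _).toFun (of adj (Sum.inl x)))⟩ =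
        coimage.mk _ ≫ restrictWithExcept ψ := by
      refine hom_ext_of adj fun w => ?_
      rw [exceptLift_of]
      rcases w with x | e
      · rfl
      · exact (map_throw ψ e).symm.trans (congrArg ψ.toFun (withExcept_throw e))
    apply TensorAlgHom.ext
    funext a
    obtain ⟨a, rfl⟩ := coimage.mk_surjective _ a
    exact congrArg (fun χ => TensorAlgHom.toFun χ a) hlift
  right_inv g := by
    ext x
    exact exceptLift_of adj E X ⟨B, g⟩ (Sum.inl x)

end Free

end TensorAlg

/-- Proposition 3.7(2): if the tensor `T ⊗ S` exists, then so does `T(- + E) ⊗ S`. -/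
theorem tensor_exists_withExcept (T S : Monad (Type u)) (E : Type u)
    (h : ∃ F : Type u ⥤ TensorAlg T S, Nonempty (F ⊣ forgetTAlg T S)) :
    ∃ F : Type u ⥤ TensorAlg (monadWithExcept T E) S,
      Nonempty (F ⊣ forgetTAlg (monadWithExcept T E) S) := by
  obtain ⟨F, ⟨adj⟩⟩ := h
  exact ⟨_, ⟨Adjunction.adjunctionOfEquivLeft (TensorAlg.freeHomEquiv adj E)
    fun _ _ _ _ _ => rfl⟩⟩
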